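/- For α ≥ 0, the function f_k(x) = ln(1+1/x) − α·√(2x+1)/(1+x) is strictly decreasing on (0,∞). -/

import Mathlib

/-!
Write `L x = log (1 + 1/x)`, `h x = √(2x+1)/(1+x)` and `g x = L x / h x`, so that
`f_k = (g - α) * h`. Both `h` and `g` decrease on `(0, ∞)`: `g` is the product of
`(1+x) L x`, whose derivative `L x - 1/x` is negative, with the decreasing `1/√(2x+1)`.
On the region `α ≤ g`, the first factor `g - α` is therefore nonnegative and strictly
decreasing and `h` is positive and decreasing, so their product strictly decreases.
-/

open Real Set

theorem StrictAntiOn.mul_antitoneOn {α R : Type*} [Preorder α] [Semiring R] [PartialOrder R]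
    [IsStrictOrderedRing R] {f g : α → R} {s : Set α} (hf : StrictAntiOn f s)
    (hg : AntitoneOn g s) (hf₀ : ∀ x ∈ s, 0 ≤ f x) (hg₀ : ∀ x ∈ s, 0 < g x) :
    StrictAntiOn (fun x => f x * g x) s := fun a ha b hb hab =>
  calc f b * g b < f a * g b := mul_lt_mul_of_pos_right (hf ha hb hab) (hg₀ b hb)
    _ ≤ f a * g a := mul_le_mul_of_nonneg_left (hg ha hb hab.le) (hf₀ a ha)

lemma log_one_add_inv_lt {x : ℝ} (hx : 0 < x) : log (1 + 1 / x) < 1 / x := by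
  have := log_lt_sub_one_of_pos (by positivity) (by simp [hx.ne'] : (1 : ℝ) + 1 / x ≠ 1)
  linarith

lemma hasDerivAt_one_add_mul_log_one_add_inv {x : ℝ} (hx : 0 < x) :
    HasDerivAt (fun x : ℝ => (1 + x) * log (1 + 1 / x)) (log (1 + 1 / x) - 1 / x) x := by
  have hinv : HasDerivAt (fun x : ℝ => 1 + 1 / x) (-1 / x ^ 2) x := by
    simpa [one_div, neg_div] using (hasDerivAt_inv hx.ne').const_add 1
  refine (((hasDerivAt_id x).const_add 1).mul (hinv.log (by positivity))).congr_deriv ?_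
  rw [id]
  field_simp
  ring

lemma strictAntiOn_one_add_mul_log_one_add_inv :
    StrictAntiOn (fun x : ℝ => (1 + x) * log (1 + 1 / x)) (Ioi 0) := by
  refine strictAntiOn_of_deriv_neg (convex_Ioi 0)
    (fun x hx => (hasDerivAt_one_add_mul_log_one_add_inv hx).continuousAt.continuousWithinAt)
    fun x hx => ?_
  rw [interior_Ioi] at hx
  rw [(hasDerivAt_one_add_mul_log_one_add_inv hx).deriv]
  linarith [log_one_add_inv_lt hx]

lemma antitoneOn_inv_sqrt_two_mul_add_one :
    AntitoneOn (fun x : ℝ => (√(2 * x + 1))⁻¹) (Ioi 0) := fun a ha b _ hab => by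
  have ha : (0 : ℝ) < 2 * a + 1 := by linarith [mem_Ioi.1 ha]
  dsimp only
  gcongr

lemma antitoneOn_sqrt_two_mul_add_one_div_one_add :
    AntitoneOn (fun x : ℝ => √(2 * x + 1) / (1 + x)) (Ioi 0) := fun a ha b hb hab => by
  have ha : 0 < a := ha
  have hb : 0 < b := hb
  have hsq : ∀ x : ℝ, 0 < x → √(2 * x + 1) / (1 + x) = √((2 * x + 1) / (1 + x) ^ 2) := by
    intro x hx
    rw [sqrt_div' _ (by positivity), sqrt_sq (by positivity)]
  simp only [hsq a ha, hsq b hb]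
  gcongr 1
  rw [div_le_div_iff₀ (by positivity) (by positivity)]
  -- `(2a+1)(1+b)² - (2b+1)(1+a)² = (b-a)(a+b+2ab)`
  nlinarith [mul_nonneg (sub_nonneg.2 hab) (by positivity : 0 ≤ a + b + 2 * a * b)]

lemma strictAntiOn_one_add_mul_log_one_add_inv_div_sqrt :
    StrictAntiOn (fun x : ℝ => (1 + x) * log (1 + 1 / x) / √(2 * x + 1)) (Ioi 0) := by
  simpa only [div_eq_mul_inv (_ * _)] using
    strictAntiOn_one_add_mul_log_one_add_inv.mul_antitoneOn antitoneOn_inv_sqrt_two_mul_add_one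
      (fun x (hx : 0 < x) => (mul_pos (by linarith) (log_pos (by simp [hx]))).le)
      fun x (hx : 0 < x) => by positivity

lemma log_one_add_inv_sub_eq_mul {x : ℝ} (hx : 0 < x) (α : ℝ) :
    log (1 + 1 / x) - α * √(2 * x + 1) / (1 + x) =
      ((1 + x) * log (1 + 1 / x) / √(2 * x + 1) - α) * (√(2 * x + 1) / (1 + x)) := by
  have : √(2 * x + 1) ≠ 0 := (sqrt_pos.2 (by linarith)).ne'
  have : 1 + x ≠ 0 := by linarith
  field_simp

theorem fk_strictAntiOn_general (α : ℝ) :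
    StrictAntiOn (fun x : ℝ => Real.log (1 + 1 / x) - α * Real.sqrt (2 * x + 1) / (1 + x))
      {x : ℝ | 0 < x ∧ α ≤ (1 + x) * Real.log (1 + 1 / x) / Real.sqrt (2 * x + 1)} := by
  set s := {x : ℝ | 0 < x ∧ α ≤ (1 + x) * Real.log (1 + 1 / x) / Real.sqrt (2 * x + 1)}
  have hs : s ⊆ Ioi 0 := fun x hx => hx.1
  have hprod := ((strictAntiOn_one_add_mul_log_one_add_inv_div_sqrt.mono hs).add_const
    (-α)).mul_antitoneOn (antitoneOn_sqrt_two_mul_add_one_div_one_add.mono hs)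
    (fun x hx => by linarith [hx.2]) fun x (hx : 0 < x ∧ _) => by have := hx.1; positivity
  exact hprod.congr fun x hx => by simp only [log_one_add_inv_sub_eq_mul hx.1, sub_eq_add_neg]

/-- For `α ≥ 0`, `f_k(x) = ln(1+1/x) − α·√(2x+1)/(1+x)` is strictly decreasing on
the region `{x > 0 : α ≤ g(x)}` where `g(x) = (1+x)·ln(1+1/x)/√(2x+1)`. -/
theorem fk_strictAntiOn (α : ℝ) (hα : 0 ≤ α) :
    StrictAntiOn (fun x : ℝ => Real.log (1 + 1 / x) - α * Real.sqrt (2 * x + 1) / (1 + x))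
      {x : ℝ | 0 < x ∧ α ≤ (1 + x) * Real.log (1 + 1 / x) / Real.sqrt (2 * x + 1)} :=
  fk_strictAntiOn_general α
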